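/- For any integers p ≥ 1 and 2 ≤ l ≤ 2p, the identity Σ_{k=0}^{⌊l/2⌋} (p! / (k!·(k+p−l)!·(l−2k)!)) · 2^{l−2k} = C(2p, l) holds, where terms with a negative factorial argument are taken to be zero. -/

import Mathlib

/-!
Compare coefficients of `X ^ l` in `(1 + X) ^ (2 * p) = (X ^ 2 + (2 * X + 1)) ^ p`. Expanding the
right side binomially, the term `X ^ (2 * k) * (2 * X + 1) ^ (p - k)` contributes
`C(p, k) * C(p - k, l - 2 * k) * 2 ^ (l - 2 * k)`, and `C(p, k) * C(p - k, l - 2 * k)` is the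
trinomial coefficient `p! / (k! (k + p - l)! (l - 2k)!)`: for `2 * k ≤ l` both vanish exactly when
`l > k + p`.
-/

open Polynomial Finset Nat

theorem Polynomial.coeff_C_mul_X_add_one_pow {R : Type*} [CommSemiring R] (a : R) (m i : ℕ) :
    ((C a * X + 1) ^ m).coeff i = a ^ i * m.choose i := by
  rw [add_pow, finsetSum_coeff]
  simp only [one_pow, mul_one, mul_pow, ← C_pow, coeff_mul_natCast, coeff_C_mul_X_pow]
  rw [Finset.sum_eq_single i (fun j _ hj => by simp [hj.symm]) fun hi => by
    simp [Nat.choose_eq_zero_of_lt (by simpa using hi)]]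
  simp

theorem Nat.factorial_div_eq_choose_mul_choose {a b c : ℕ} (h : b + c ≤ a) :
    a ! / (b ! * (a - b - c)! * c !) = a.choose b * (a - b).choose c := by
  have hfac : a.choose b * (a - b).choose c * (b ! * (a - b - c)! * c !) = a ! := by
    rw [← choose_mul_factorial_mul_factorial (show b ≤ a by omega),
      ← choose_mul_factorial_mul_factorial (show c ≤ a - b by omega)]
    ring
  rw [← hfac, Nat.mul_div_cancel _ (by positivity)]

theorem ite_factorial_div_eq_choose_mul_choose {p l k : ℕ} (hk : 2 * k ≤ l) :
    (if l ≤ k + p then p ! / (k ! * (k + p - l)! * (l - 2 * k)!) else 0) =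
      p.choose k * (p - k).choose (l - 2 * k) := by
  split_ifs with hkl
  · rw [show k + p - l = p - k - (l - 2 * k) by omega]
    exact factorial_div_eq_choose_mul_choose (by omega)
  · rcases le_or_gt k p with hkp | hpk
    · simp [choose_eq_zero_of_lt (show p - k < l - 2 * k by omega)]
    · simp [choose_eq_zero_of_lt hpk]

theorem sum_choose_mul_choose_mul_two_pow (p l : ℕ) :
    ∑ k ∈ range (l / 2 + 1), p.choose k * (p - k).choose (l - 2 * k) * 2 ^ (l - 2 * k) =
      (2 * p).choose l := by
  have hsq : (1 + X : ℕ[X]) ^ (2 * p) = ((X : ℕ[X]) ^ 2 + (C 2 * X + 1)) ^ p := by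
    rw [pow_mul]; congr 1; simp only [map_ofNat]; ring
  have hcoeff := coeff_one_add_X_pow ℕ (2 * p) l
  rw [hsq, add_pow, finsetSum_coeff] at hcoeff
  simp only [← pow_mul, mul_assoc, coeff_X_pow_mul', coeff_mul_natCast,
    coeff_C_mul_X_add_one_pow, Nat.cast_id] at hcoeff
  rw [← hcoeff, ← sum_filter, ← sum_filter_of_ne (p := (· ≤ p)) fun k _ hk => ?_]
  · have hsupp : {k ∈ range (l / 2 + 1) | k ≤ p} = {k ∈ range (p + 1) | 2 * k ≤ l} := by
      ext k; simp only [mem_filter, mem_range]; omega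
    rw [hsupp]
    exact sum_congr rfl fun k _ => by ring
  · by_contra hkp
    simp [choose_eq_zero_of_lt (show p < k by omega)] at hk

theorem trinomial_sum_identity_general (p l : ℕ) :
    ∑ k ∈ Finset.range (l / 2 + 1),
      (if l ≤ k + p then
        Nat.factorial p /
          (Nat.factorial k * Nat.factorial (k + p - l) * Nat.factorial (l - 2 * k)) *
          2 ^ (l - 2 * k)
      else 0) = Nat.choose (2 * p) l := by
  rw [← sum_choose_mul_choose_mul_two_pow]
  refine sum_congr rfl fun k hk => ?_
  have hkl : 2 * k ≤ l := by rw [mem_range] at hk; omega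
  rw [← ite_zero_mul, ite_factorial_div_eq_choose_mul_choose hkl]

theorem trinomial_sum_identity (p l : ℕ) (hp : 1 ≤ p) (hl2 : 2 ≤ l) (hl : l ≤ 2 * p) :
    ∑ k ∈ Finset.range (l / 2 + 1),
      (if l ≤ k + p then
        Nat.factorial p /
          (Nat.factorial k * Nat.factorial (k + p - l) * Nat.factorial (l - 2 * k)) *
          2 ^ (l - 2 * k)
      else 0) = Nat.choose (2 * p) l :=
  trinomial_sum_identity_general p l
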